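/- arXiv:1706.03376 — 2 statements merged into one kernel-verified Lean document; each statement's English description precedes it below -/
import Mathlib

section
/- Let G be a linearly ordered abelian group with finite spines, p a prime, H_0 ⊊ H_1 ⊊ … ⊊ H_{n-1} convex subgroups of G with H_n := G, and e_0 < e_1 < … < e_{n-1} positive integers. Then for every r < n, the index [⋂_{i<n, i≠r}(H_i + p^{e_i}G) : ⋂_{i<n}(H_i + p^{e_i}G)] is infinite if and only if the index [H_{r+1} : H_r + pH_{r+1}] is infinite (the latter equals the index of p(H_{r+1}/H_r) in H_{r+1}/H_r). -/
/-- `nH = {n • h : h ∈ H}` as a subgroup. -/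
def smulSub {G : Type*} [AddCommGroup G] (n : ℕ) (H : AddSubgroup G) : AddSubgroup G :=
  AddSubgroup.map (n • AddMonoidHom.id G) H

/-- A subgroup `H` of a linearly ordered abelian group is convex if
`0 ≤ g ≤ h` and `h ∈ H` imply `g ∈ H`. -/
def IsConvexSubgroup {G : Type*} [AddCommGroup G] [LinearOrder G] [IsOrderedAddMonoid G] (H : AddSubgroup G) : Prop :=
  ∀ g h : G, 0 ≤ g → g ≤ h → h ∈ H → g ∈ H

/-- `H_n(a)`: the largest convex subgroup `H` of `G` with `a ∉ H + nG` (equivalently the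
union, i.e. supremum, of all such subgroups); it is the trivial subgroup when `a ∈ nG`. -/
def Hsub {G : Type*} [AddCommGroup G] [LinearOrder G] [IsOrderedAddMonoid G] (n : ℕ) (a : G) : AddSubgroup G :=
  sSup {H : AddSubgroup G | IsConvexSubgroup H ∧ a ∉ H ⊔ smulSub n ⊤}

/-!
Write `T = H (r+1)`, `K i = H i + p^(e i) G` and `A = ⋂_{i ≠ r} K i`; the index in question is
`[A : K r ∩ A]`.

Multiplication by `m = p^(e r - 1)` maps `T` into `A` (into `K i` for `i < r` because
`e i ≤ e r - 1`, and for `i > r` because `T ≤ H i`), and by convexity of `H r` and `T` an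
element `x ∈ T` has `m x ∈ K r` iff `x ∈ H r + p T`. Hence `[T : H r + p T] = [m T : K r ∩ m T]`,
which is at most `[A : K r ∩ A]`.

Conversely `A ≤ T + p^(e r) G`, so `[A : K r ∩ A] ≤ [T : K r ∩ T] = [T : H r + p^(e r) T]`, and
each step `[H r + p^k T : H r + p^(k+1) T]` of this tower is bounded by `[T : H r + p T]`
through multiplication by `p^k`.
-/

lemma Finset.iInf_eq_inf_iInf_erase {ι α : Type*} [CompleteLattice α] [DecidableEq ι]
    {s : Finset ι} {i : ι} (hi : i ∈ s) (f : ι → α) :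
    ⨅ j ∈ s, f j = f i ⊓ ⨅ j ∈ s.erase i, f j := by
  conv_lhs => rw [← Finset.insert_erase hi]
  exact Finset.iInf_insert i _ f

section smulSub

variable {G : Type*} [AddCommGroup G]

lemma nsmul_mem_smulSub (n : ℕ) {H : AddSubgroup G} {h : G} (hh : h ∈ H) :
    n • h ∈ smulSub n H :=
  AddSubgroup.mem_map_of_mem _ hh

lemma smulSub_le_self (n : ℕ) (H : AddSubgroup G) : smulSub n H ≤ H :=
  AddSubgroup.map_le_iff_le_comap.mpr fun _ hh => AddSubgroup.nsmul_mem H hh n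

lemma smulSub_mono (n : ℕ) {H K : AddSubgroup G} (hHK : H ≤ K) : smulSub n H ≤ smulSub n K :=
  AddSubgroup.map_mono hHK

lemma smulSub_le_of_dvd {a b : ℕ} (hab : a ∣ b) (H : AddSubgroup G) :
    smulSub b H ≤ smulSub a H := by
  obtain ⟨c, rfl⟩ := hab
  rintro _ ⟨h, hh, rfl⟩
  simpa only [smulSub, AddMonoidHom.smul_apply, AddMonoidHom.id_apply, mul_comm a, mul_nsmul]
    using nsmul_mem_smulSub a (AddSubgroup.nsmul_mem H hh c)

lemma smulSub_one (H : AddSubgroup G) : smulSub 1 H = H := by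
  simp [smulSub]

lemma relIndex_smulSub (K T : AddSubgroup G) (m : ℕ) :
    K.relIndex (smulSub m T) = (AddSubgroup.comap (m • AddMonoidHom.id G) K).relIndex T :=
  (AddSubgroup.relIndex_comap K _ T).symm

lemma sup_smulSub_le_comap_sup_smulSub_mul (N T : AddSubgroup G) (a b : ℕ) :
    N ⊔ smulSub b T ≤ AddSubgroup.comap (a • AddMonoidHom.id G) (N ⊔ smulSub (a * b) T) := by
  refine sup_le (fun x hx => AddSubgroup.mem_sup_left (AddSubgroup.nsmul_mem N hx a)) ?_
  rintro _ ⟨t, ht, rfl⟩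
  refine AddSubgroup.mem_sup_right ?_
  simpa only [AddSubgroup.mem_comap, AddMonoidHom.smul_apply, AddMonoidHom.id_apply, ← mul_nsmul',
    mul_comm b a] using nsmul_mem_smulSub (a * b) ht

/-- Multiplication by `a` maps `T / (N + b T)` onto `(N + a T) / (N + a b T)`. -/
lemma relIndex_sup_smulSub_mul_ne_zero {N T : AddSubgroup G} {a b : ℕ}
    (ha : (N ⊔ smulSub a T).relIndex T ≠ 0) (hb : (N ⊔ smulSub b T).relIndex T ≠ 0) :
    (N ⊔ smulSub (a * b) T).relIndex T ≠ 0 := by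
  have hsup : smulSub a T ⊔ (N ⊔ smulSub (a * b) T) = N ⊔ smulSub a T :=
    le_antisymm (sup_le le_sup_right (sup_le_sup_left (smulSub_le_of_dvd (dvd_mul_right a b) T) N))
      (sup_le (le_sup_of_le_right le_sup_left) le_sup_left)
  have hstep : (N ⊔ smulSub (a * b) T).relIndex (N ⊔ smulSub a T) ≠ 0 := by
    rw [← hsup, AddSubgroup.relIndex_sup_right, relIndex_smulSub]
    exact mt (AddSubgroup.relIndex_eq_zero_of_le_left
      (sup_smulSub_le_comap_sup_smulSub_mul N T a b)) hb
  exact AddSubgroup.relIndex_ne_zero_trans hstep ha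

lemma relIndex_sup_smulSub_pow_ne_zero {N T : AddSubgroup G} {p : ℕ}
    (hp : (N ⊔ smulSub p T).relIndex T ≠ 0) (hNT : N ≤ T) :
    ∀ k, (N ⊔ smulSub (p ^ k) T).relIndex T ≠ 0
  | 0 => by simp [smulSub_one, sup_eq_right.mpr hNT]
  | k + 1 => by
    rw [pow_succ]
    exact relIndex_sup_smulSub_mul_ne_zero (relIndex_sup_smulSub_pow_ne_zero hp hNT k) hp

end smulSub

section Convex

variable {G : Type*} [AddCommGroup G] [LinearOrder G] [IsOrderedAddMonoid G]

lemma isConvexSubgroup_top : IsConvexSubgroup (⊤ : AddSubgroup G) :=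
  fun g _ _ _ _ => AddSubgroup.mem_top g

namespace IsConvexSubgroup

variable {H T : AddSubgroup G}

lemma mem_of_nsmul_mem (hH : IsConvexSubgroup H) {m : ℕ} (hm : m ≠ 0) {x : G}
    (hx : m • x ∈ H) : x ∈ H := by
  have key : ∀ y : G, 0 ≤ y → m • y ∈ H → y ∈ H :=
    fun y hy hmy => hH y (m • y) hy (le_self_nsmul hy hm) hmy
  rcases le_total 0 x with hx0 | hx0
  · exact key x hx0 hx
  · rw [← AddSubgroup.neg_mem_iff] at hx ⊢
    exact key (-x) (neg_nonneg.mpr hx0) (by rwa [smul_neg])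

lemma smulSub_top_inf (hT : IsConvexSubgroup T) {k : ℕ} (hk : k ≠ 0) :
    smulSub k ⊤ ⊓ T = smulSub k T := by
  refine le_antisymm ?_ (le_inf (smulSub_mono k le_top) (smulSub_le_self k T))
  rintro _ ⟨⟨g, -, rfl⟩, hgT⟩
  exact nsmul_mem_smulSub k (hT.mem_of_nsmul_mem hk hgT)

lemma sup_smulSub_top_inf (hT : IsConvexSubgroup T) (hHT : H ≤ T) {k : ℕ} (hk : k ≠ 0) :
    (H ⊔ smulSub k ⊤) ⊓ T = H ⊔ smulSub k T := by
  rw [sup_inf_assoc_of_le _ hHT, hT.smulSub_top_inf hk]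

lemma comap_sup_smulSub_top (hH : IsConvexSubgroup H) {m : ℕ} (hm : m ≠ 0) (q : ℕ) :
    AddSubgroup.comap (m • AddMonoidHom.id G) (H ⊔ smulSub (m * q) ⊤) = H ⊔ smulSub q ⊤ := by
  refine le_antisymm ?_ (sup_smulSub_le_comap_sup_smulSub_mul H ⊤ m q)
  intro x hx
  obtain ⟨h, hh, _, ⟨g, -, rfl⟩, hsum⟩ := AddSubgroup.mem_sup.mp hx
  have hdiff : m • (x - q • g) ∈ H := by
    change h + (m * q) • g = m • x at hsum
    rwa [nsmul_sub, ← mul_nsmul', ← hsum, add_sub_cancel_right]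
  simpa using AddSubgroup.add_mem _ (AddSubgroup.mem_sup_left (hH.mem_of_nsmul_mem hm hdiff))
    (AddSubgroup.mem_sup_right (nsmul_mem_smulSub q (AddSubgroup.mem_top g)))

end IsConvexSubgroup

end Convex

section Chain

variable {G : Type*} [AddCommGroup G] {n r : ℕ} {H : ℕ → AddSubgroup G} {e : ℕ → ℕ}

lemma smulSub_le_iInf_erase (p : ℕ) (hchain : ∀ i j : ℕ, i < j → j ≤ n → H i < H j)
    (hemono : ∀ i j : ℕ, i < j → j < n → e i < e j) (hr : r < n) :
    smulSub (p ^ (e r - 1)) (H (r + 1)) ≤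
      ⨅ i ∈ (Finset.range n).erase r, (H i ⊔ smulSub (p ^ e i) ⊤) := by
  refine le_iInf₂ fun i hi => ?_
  obtain ⟨hir, hin⟩ := Finset.mem_erase.mp hi
  rw [Finset.mem_range] at hin
  rcases hir.lt_or_gt with hlt | hgt
  · have hei : e i ≤ e r - 1 := Nat.le_sub_one_of_lt (hemono i r hlt hr)
    exact le_sup_of_le_right
      ((smulSub_mono _ le_top).trans (smulSub_le_of_dvd (pow_dvd_pow p hei) ⊤))
  · have hle : H (r + 1) ≤ H i := by
      rcases (show r + 1 ≤ i from hgt).lt_or_eq with h | h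
      · exact (hchain _ _ h hin.le).le
      · rw [h]
    exact le_sup_of_le_left ((smulSub_le_self _ _).trans hle)

lemma iInf_erase_le_sup_smulSub (p : ℕ) (hHn : H n = ⊤)
    (hemono : ∀ i j : ℕ, i < j → j < n → e i < e j) (hr : r < n) :
    ⨅ i ∈ (Finset.range n).erase r, (H i ⊔ smulSub (p ^ e i) ⊤) ≤
      H (r + 1) ⊔ smulSub (p ^ e r) ⊤ := by
  rcases (show r + 1 ≤ n from hr).lt_or_eq with h | h
  · have hmem : r + 1 ∈ (Finset.range n).erase r :=
      Finset.mem_erase.mpr ⟨r.succ_ne_self, Finset.mem_range.mpr h⟩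
    exact (iInf₂_le (r + 1) hmem).trans (sup_le_sup_left
      (smulSub_le_of_dvd (pow_dvd_pow p (hemono r (r + 1) r.lt_succ_self h).le) ⊤) _)
  · rw [h, hHn]
    exact le_sup_of_le_left le_top

end Chain

theorem relindex_inf_infinite_iff_general {G : Type*} [AddCommGroup G] [LinearOrder G] [IsOrderedAddMonoid G]
    (p : ℕ) (hp : p.Prime) (n : ℕ) (H : ℕ → AddSubgroup G)
    (hconv : ∀ i < n, IsConvexSubgroup (H i))
    (hchain : ∀ i j : ℕ, i < j → j ≤ n → H i < H j)
    (hHn : H n = ⊤)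
    (e : ℕ → ℕ) (hepos : ∀ i < n, 0 < e i)
    (hemono : ∀ i j : ℕ, i < j → j < n → e i < e j) :
    ∀ r < n,
      ((⨅ i ∈ Finset.range n, (H i ⊔ smulSub (p ^ e i) ⊤)).relIndex
          (⨅ i ∈ (Finset.range n).erase r, (H i ⊔ smulSub (p ^ e i) ⊤)) = 0) ↔
        ((H r ⊔ smulSub p (H (r + 1))).relIndex (H (r + 1)) = 0) := by
  intro r hr
  have hT : IsConvexSubgroup (H (r + 1)) := by
    rcases (show r + 1 ≤ n from hr).lt_or_eq with h | h
    · exact hconv _ h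
    · rw [h, hHn]
      exact isConvexSubgroup_top
  have hHr : H r ≤ H (r + 1) := (hchain r (r + 1) r.lt_succ_self hr).le
  have hKr : (H r ⊔ smulSub (p ^ e r) ⊤) ⊓ H (r + 1) = H r ⊔ smulSub (p ^ e r) (H (r + 1)) :=
    hT.sup_smulSub_top_inf hHr (pow_ne_zero _ hp.ne_zero)
  rw [Finset.iInf_eq_inf_iInf_erase (Finset.mem_range.mpr hr), AddSubgroup.inf_relIndex_right]
  constructor
  · contrapose
    intro hfin
    have hsup : (H r ⊔ smulSub (p ^ e r) ⊤).relIndex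
        (H (r + 1) ⊔ (H r ⊔ smulSub (p ^ e r) ⊤)) ≠ 0 := by
      rw [AddSubgroup.relIndex_sup_right, ← AddSubgroup.inf_relIndex_right, hKr]
      exact relIndex_sup_smulSub_pow_ne_zero hfin hHr _
    exact mt (AddSubgroup.relIndex_eq_zero_of_le_right ((iInf_erase_le_sup_smulSub p hHn hemono
      hr).trans (sup_le_sup_left le_sup_right _))) hsup
  · intro hinf
    refine AddSubgroup.relIndex_eq_zero_of_le_right (smulSub_le_iInf_erase p hchain hemono hr) ?_
    have hpow : p ^ e r = p ^ (e r - 1) * p := by rw [← pow_succ, Nat.sub_add_cancel (hepos r hr)]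
    rwa [relIndex_smulSub, ← AddSubgroup.inf_relIndex_right, hpow,
      (hconv r hr).comap_sup_smulSub_top (pow_ne_zero _ hp.ne_zero),
      hT.sup_smulSub_top_inf hHr hp.ne_zero]

/-- Let `G` be a linearly ordered abelian group with finite spines, `p` a prime,
`H 0 ⊊ … ⊊ H (n-1)` convex subgroups with `H n = G`, and `e 0 < … < e (n-1)` positive
integers.  Then for every `r < n`, the index
`[⋂_{i<n, i≠r} (H i + p^(e i) G) : ⋂_{i<n} (H i + p^(e i) G)]` is infinite iff the index
`[H (r+1) : H r + p H (r+1)]` is infinite.  (Infinite index is expressed by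
`AddSubgroup.relindex … = 0`, where `B.relindex A` is the index `[A : B ⊓ A]`.) -/
theorem relindex_inf_infinite_iff {G : Type*} [AddCommGroup G] [LinearOrder G] [IsOrderedAddMonoid G]
    (hfs : ∀ q : ℕ, q.Prime → {H : AddSubgroup G | ∃ a : G, H = Hsub q a}.Finite)
    (p : ℕ) (hp : p.Prime) (n : ℕ) (H : ℕ → AddSubgroup G)
    (hconv : ∀ i < n, IsConvexSubgroup (H i))
    (hchain : ∀ i j : ℕ, i < j → j ≤ n → H i < H j)
    (hHn : H n = ⊤)
    (e : ℕ → ℕ) (hepos : ∀ i < n, 0 < e i)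
    (hemono : ∀ i j : ℕ, i < j → j < n → e i < e j) :
    ∀ r < n,
      ((⨅ i ∈ Finset.range n, (H i ⊔ smulSub (p ^ e i) ⊤)).relIndex
          (⨅ i ∈ (Finset.range n).erase r, (H i ⊔ smulSub (p ^ e i) ⊤)) = 0) ↔
        ((H r ⊔ smulSub p (H (r + 1))).relIndex (H (r + 1)) = 0) :=
  relindex_inf_infinite_iff_general p hp n H hconv hchain hHn e hepos hemono
end

section
/- Let G be a linearly ordered abelian group, H a convex subgroup of G, and p a prime. Then the index [G : pG] is infinite if and only if the index [H : pH] is infinite or the index [G : H + pG] is infinite (the latter equals the index of p(G/H) in G/H). -/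
/-! Since `pG ∩ H = pH` for a convex subgroup `H` (it is closed under taking `p`-th roots), the
second isomorphism theorem gives `[H + pG : pG] = [H : pH]`, and the tower law
`[G : pG] = [H + pG : pG] · [G : H + pG]` yields the claim. -/

lemma mem_smulSub {G : Type*} [AddCommGroup G] {n : ℕ} {H : AddSubgroup G} {x : G} :
    x ∈ smulSub n H ↔ ∃ h ∈ H, n • h = x := by
  simp [smulSub, AddSubgroup.mem_map]

section LinearOrder

variable {G : Type*} [AddCommGroup G] [LinearOrder G] [IsOrderedAddMonoid G] {H : AddSubgroup G}

lemma IsConvexSubgroup.mem_of_abs_le (hH : IsConvexSubgroup H) {g h : G} (hgh : |g| ≤ |h|)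
    (hh : h ∈ H) : g ∈ H :=
  abs_mem_iff.mp (hH _ _ (abs_nonneg g) hgh (abs_mem_iff.mpr hh))

lemma IsConvexSubgroup.mem_of_nsmul_mem_s14 (hH : IsConvexSubgroup H) {n : ℕ} (hn : n ≠ 0) {g : G}
    (hg : n • g ∈ H) : g ∈ H := by
  refine hH.mem_of_abs_le ?_ hg
  calc |g| = 1 • |g| := (one_nsmul _).symm
    _ ≤ n • |g| := nsmul_le_nsmul_left (abs_nonneg g) (Nat.one_le_iff_ne_zero.mpr hn)
    _ = |n • g| := (abs_nsmul n g).symm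

lemma IsConvexSubgroup.smulSub_top_inf_eq (hH : IsConvexSubgroup H) (n : ℕ) :
    smulSub n ⊤ ⊓ H = smulSub n H := by
  refine le_antisymm ?_ fun x hx => ?_
  · rintro x ⟨hxG, hxH⟩
    obtain ⟨g, -, rfl⟩ := mem_smulSub.mp hxG
    rcases eq_or_ne n 0 with rfl | hn
    · exact mem_smulSub.mpr ⟨0, H.zero_mem, by simp⟩
    · exact mem_smulSub.mpr ⟨g, hH.mem_of_nsmul_mem_s14 hn hxH, rfl⟩
  · obtain ⟨h, hh, rfl⟩ := mem_smulSub.mp hx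
    exact ⟨mem_smulSub.mpr ⟨h, trivial, rfl⟩, H.nsmul_mem hh n⟩

end LinearOrder

theorem index_p_infinite_iff_of_convex_general {G : Type*} [AddCommGroup G] [LinearOrder G] [IsOrderedAddMonoid G]
    (H : AddSubgroup G) (hH : IsConvexSubgroup H) (p : ℕ) :
    (smulSub p (⊤ : AddSubgroup G)).index = 0 ↔
      ((smulSub p H).relIndex H = 0 ∨ (H ⊔ smulSub p (⊤ : AddSubgroup G)).index = 0) := by
  have tower := AddSubgroup.relIndex_mul_index (le_sup_right : smulSub p ⊤ ≤ H ⊔ smulSub p ⊤)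
  have second_iso : (smulSub p ⊤).relIndex (H ⊔ smulSub p ⊤) = (smulSub p H).relIndex H := by
    rw [AddSubgroup.relIndex_sup_right, ← AddSubgroup.inf_relIndex_right, hH.smulSub_top_inf_eq]
  rw [← tower, second_iso, Nat.mul_eq_zero]

/-- Let `G` be a linearly ordered abelian group, `H` a convex subgroup, `p` a prime.
Then `[G : pG]` is infinite iff `[H : pH]` is infinite or `[G : H + pG]` is infinite.
(Infinite index is expressed by `index = 0`, resp. `relindex = 0`.) -/
theorem index_p_infinite_iff_of_convex {G : Type*} [AddCommGroup G] [LinearOrder G] [IsOrderedAddMonoid G]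
    (H : AddSubgroup G) (hH : IsConvexSubgroup H) (p : ℕ) (hp : p.Prime) :
    (smulSub p (⊤ : AddSubgroup G)).index = 0 ↔
      ((smulSub p H).relIndex H = 0 ∨ (H ⊔ smulSub p (⊤ : AddSubgroup G)).index = 0) :=
  index_p_infinite_iff_of_convex_general H hH p
end
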